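/- Let Ψ: ℝⁿ → ℂ be continuous with Re Ψ ≥ 0, suppose there exist M > 0 and β ∈ (0,2] such that Re Ψ(ξ) ≥ ‖ξ‖^β whenever ‖ξ‖ > M, and suppose sup_{ξ ∈ ℝⁿ} |Ψ(ξ)|/(1 + ‖ξ‖²) < ∞. Fix θ ∈ (0,1] and T > 0, and let p_t(x) := (2π)^{−n} ∫_{ℝⁿ} e^{−tΨ(ξ)} e^{−i⟨x,ξ⟩} dξ. Then there is a constant C > 0 such that |p_{t+ε}(x) − p_t(x)| ≤ C ε^θ t^{−(2θ+n)/β} for all t ∈ (0,T], all ε > 0 and all x ∈ ℝⁿ. -/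

import Mathlib

/-!
Since `Re Ψ ≥ 0`, `‖e^{-εΨ} - 1‖ ≤ 2 min (1, ε‖Ψ‖) ≤ 2 (ε‖Ψ‖)^θ ≤ 2 L^θ ε^θ (1 + ‖ξ‖^{2θ})`,
and the growth condition gives `e^{-t Re Ψ(ξ)} ≤ e^{T M^β} e^{-t‖ξ‖^β}`. Hence
`‖p_{t+ε}(x) - p_t(x)‖` is at most `ε^θ` times the moments `∫ e^{-t‖ξ‖^β} ‖ξ‖^q dξ`
(`q = 0, 2θ`), and the substitution `ξ = t^{-1/β} η` shows that these equal
`t^{-(q+n)/β}` times their value at `t = 1`.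
-/

open MeasureTheory Complex Set

noncomputable section

/-- The transition density `p_t(x) = (2π)^{-n} ∫ e^{-tΨ(ξ)} e^{-i⟨x,ξ⟩} dξ`. -/
def transDensity (n : ℕ) (Ψ : EuclideanSpace ℝ (Fin n) → ℂ) (t : ℝ)
    (x : EuclideanSpace ℝ (Fin n)) : ℂ :=
  (((2 * Real.pi) ^ n)⁻¹ : ℝ) *
    ∫ ξ : EuclideanSpace ℝ (Fin n),
      Complex.exp (-(t : ℂ) * Ψ ξ) * Complex.exp (-(Complex.I * ((inner ℝ x ξ : ℝ) : ℂ)))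

theorem Real.min_one_le_rpow {y θ : ℝ} (hy : 0 ≤ y) (hθ₀ : 0 ≤ θ) (hθ₁ : θ ≤ 1) :
    min 1 y ≤ y ^ θ := by
  rcases le_total y 1 with h | h
  · calc min 1 y ≤ y ^ (1 : ℝ) := by rw [Real.rpow_one]; exact min_le_right _ _
      _ ≤ y ^ θ := Real.rpow_le_rpow_of_exponent_ge' hy h hθ₀ hθ₁
  · exact (min_le_left _ _).trans (Real.one_le_rpow h hθ₀)

theorem Complex.norm_exp_neg_sub_one_le {w : ℂ} (hw : 0 ≤ w.re) :
    ‖exp (-w) - 1‖ ≤ 2 * min 1 ‖w‖ := by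
  rcases le_total ‖w‖ 1 with h | h
  · rw [min_eq_right h, ← norm_neg w]
    exact norm_exp_sub_one_le (by rwa [norm_neg])
  · rw [min_eq_left h]
    have hexp : ‖exp (-w)‖ ≤ 1 := by
      rw [norm_exp, neg_re, Real.exp_le_one_iff]
      linarith
    calc ‖exp (-w) - 1‖ ≤ ‖exp (-w)‖ + ‖(1 : ℂ)‖ := norm_sub_le _ _
      _ ≤ 2 * 1 := by rw [norm_one]; linarith

theorem Complex.norm_exp_neg_sub_one_le_rpow {w : ℂ} (hw : 0 ≤ w.re) {θ : ℝ} (hθ₀ : 0 ≤ θ)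
    (hθ₁ : θ ≤ 1) : ‖exp (-w) - 1‖ ≤ 2 * ‖w‖ ^ θ :=
  (norm_exp_neg_sub_one_le hw).trans (by gcongr; exact Real.min_one_le_rpow (norm_nonneg w) hθ₀ hθ₁)

theorem Real.mul_one_add_sq_rpow_le {L s θ : ℝ} (hL : 0 ≤ L) (hs : 0 ≤ s) (hθ₀ : 0 ≤ θ)
    (hθ₁ : θ ≤ 1) : (L * (1 + s ^ 2)) ^ θ ≤ L ^ θ * (1 + s ^ (2 * θ)) := by
  rw [Real.mul_rpow hL (by positivity)]
  gcongr
  calc (1 + s ^ 2) ^ θ ≤ 1 ^ θ + (s ^ 2) ^ θ :=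
        Real.rpow_add_le_add_rpow zero_le_one (sq_nonneg s) hθ₀ hθ₁
    _ = 1 + s ^ (2 * θ) := by
        rw [Real.one_rpow, ← Real.rpow_natCast, ← Real.rpow_mul hs]
        norm_num

theorem Complex.norm_exp_neg_ofReal_mul_sub_one_le {z : ℂ} (hz : 0 ≤ z.re) {L s ε θ : ℝ}
    (hzL : ‖z‖ ≤ L * (1 + s ^ 2)) (hs : 0 ≤ s) (hε : 0 ≤ ε) (hθ₀ : 0 ≤ θ) (hθ₁ : θ ≤ 1) :
    ‖exp (-(ε : ℂ) * z) - 1‖ ≤ 2 * L ^ θ * ε ^ θ * (1 + s ^ (2 * θ)) := by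
  have hL : 0 ≤ L := nonneg_of_mul_nonneg_left ((norm_nonneg z).trans hzL) (by positivity)
  have hεz : 0 ≤ ((ε : ℂ) * z).re := by simpa using mul_nonneg hε hz
  calc ‖exp (-(ε : ℂ) * z) - 1‖ ≤ 2 * ‖(ε : ℂ) * z‖ ^ θ := by
        rw [neg_mul]; exact norm_exp_neg_sub_one_le_rpow hεz hθ₀ hθ₁
    _ = 2 * ε ^ θ * ‖z‖ ^ θ := by
        rw [norm_mul, Complex.norm_real, Real.norm_of_nonneg hε, Real.mul_rpow hε (norm_nonneg z)]
        ring
    _ ≤ 2 * ε ^ θ * (L ^ θ * (1 + s ^ (2 * θ))) := by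
        gcongr
        exact (Real.rpow_le_rpow (norm_nonneg z) hzL hθ₀).trans
          (Real.mul_one_add_sq_rpow_le hL hs hθ₀ hθ₁)
    _ = 2 * L ^ θ * ε ^ θ * (1 + s ^ (2 * θ)) := by ring

theorem exp_neg_mul_re_le {E : Type*} [SeminormedAddGroup E] {Ψ : E → ℂ} {M β : ℝ}
    (hΨre : ∀ ξ, 0 ≤ (Ψ ξ).re) (hM : 0 ≤ M) (hβ : 0 ≤ β)
    (hgrowth : ∀ ξ, M < ‖ξ‖ → ‖ξ‖ ^ β ≤ (Ψ ξ).re) {t T : ℝ} (ht : 0 ≤ t) (htT : t ≤ T) (ξ : E) :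
    Real.exp (-(t * (Ψ ξ).re)) ≤ Real.exp (T * M ^ β) * Real.exp (-(t * ‖ξ‖ ^ β)) := by
  have hlow : ‖ξ‖ ^ β - M ^ β ≤ (Ψ ξ).re := by
    rcases le_or_gt ‖ξ‖ M with h | h
    · linarith [hΨre ξ, Real.rpow_le_rpow (norm_nonneg ξ) h hβ]
    · linarith [hgrowth ξ h, Real.rpow_nonneg hM β]
  rw [← Real.exp_add, Real.exp_le_exp]
  nlinarith [Real.rpow_nonneg hM β]

section RadialMoments

open Module

variable {E : Type*} [NormedAddCommGroup E] [NormedSpace ℝ E] [FiniteDimensional ℝ E]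
  [MeasurableSpace E] [BorelSpace E] (μ : Measure E) [μ.IsAddHaarMeasure]

theorem integrable_exp_neg_mul_rpow_norm_mul_rpow_norm {β t q : ℝ} (hβ : 0 < β) (ht : 0 < t)
    (hq : 0 ≤ q) : Integrable (fun x : E => Real.exp (-(t * ‖x‖ ^ β)) * ‖x‖ ^ q) μ := by
  rcases subsingleton_or_nontrivial E with hE | hE
  · have hconst : (fun x : E => Real.exp (-(t * ‖x‖ ^ β)) * ‖x‖ ^ q) =
        fun _ => Real.exp (-(t * ‖(0 : E)‖ ^ β)) * ‖(0 : E)‖ ^ q := by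
      ext x; rw [Subsingleton.elim x 0]
    rw [hconst]
    exact integrable_const _
  · refine (integrable_fun_norm_addHaar μ (f := fun y => Real.exp (-(t * y ^ β)) * y ^ q)).2 ?_
    refine (integrableOn_rpow_mul_exp_neg_mul_rpow (s := q + (finrank ℝ E - 1 : ℕ))
      (by linarith [(finrank ℝ E - 1 : ℕ).cast_nonneg (α := ℝ)]) hβ ht).congr_fun
      (fun y (hy : 0 < y) => ?_) measurableSet_Ioi
    dsimp only
    rw [smul_eq_mul, Real.rpow_add hy, Real.rpow_natCast, neg_mul]
    ring

theorem integral_exp_neg_mul_rpow_norm_mul_rpow_norm {β t : ℝ} (hβ : β ≠ 0) (ht : 0 < t)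
    (q : ℝ) :
    ∫ x, Real.exp (-(t * ‖x‖ ^ β)) * ‖x‖ ^ q ∂μ =
      t ^ (-((q + finrank ℝ E) / β)) * ∫ x, Real.exp (-‖x‖ ^ β) * ‖x‖ ^ q ∂μ := by
  set R := t ^ (-β⁻¹)
  have hR : 0 < R := Real.rpow_pos_of_pos ht _
  have hscale : ∀ x : E, Real.exp (-(t * ‖R • x‖ ^ β)) * ‖R • x‖ ^ q =
      R ^ q * (Real.exp (-‖x‖ ^ β) * ‖x‖ ^ q) := by
    intro x
    have hRβ : t * R ^ β = 1 := by
      rw [← Real.rpow_mul ht.le, neg_mul, inv_mul_cancel₀ hβ, Real.rpow_neg_one,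
        mul_inv_cancel₀ ht.ne']
    rw [norm_smul, Real.norm_of_nonneg hR.le, Real.mul_rpow hR.le (norm_nonneg _),
      Real.mul_rpow hR.le (norm_nonneg _), ← mul_assoc t, hRβ, one_mul]
    ring
  have hcomp := μ.integral_comp_smul (fun x => Real.exp (-(t * ‖x‖ ^ β)) * ‖x‖ ^ q) R
  simp only [hscale, integral_const_mul, smul_eq_mul] at hcomp
  rw [abs_of_pos (by positivity), eq_inv_mul_iff_mul_eq₀ (by positivity)] at hcomp
  rw [← hcomp, ← mul_assoc, ← Real.rpow_natCast, ← Real.rpow_add hR, ← Real.rpow_mul ht.le]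
  congr 2
  ring

theorem integrable_exp_neg_mul_rpow_norm_mul_one_add_rpow_norm {β t q : ℝ} (hβ : 0 < β)
    (ht : 0 < t) (hq : 0 ≤ q) :
    Integrable (fun x : E => Real.exp (-(t * ‖x‖ ^ β)) * (1 + ‖x‖ ^ q)) μ := by
  have hint₀ := integrable_exp_neg_mul_rpow_norm_mul_rpow_norm μ hβ ht le_rfl
  simp only [Real.rpow_zero, mul_one] at hint₀
  simp_rw [mul_one_add]
  exact hint₀.add (integrable_exp_neg_mul_rpow_norm_mul_rpow_norm μ hβ ht hq)

theorem integral_exp_neg_mul_rpow_norm_mul_one_add_rpow_norm_le {β t T q : ℝ} (hβ : 0 < β)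
    (hq : 0 ≤ q) (ht : 0 < t) (htT : t ≤ T) :
    ∫ x, Real.exp (-(t * ‖x‖ ^ β)) * (1 + ‖x‖ ^ q) ∂μ ≤
      (T ^ (q / β) * ∫ x, Real.exp (-‖x‖ ^ β) ∂μ + ∫ x, Real.exp (-‖x‖ ^ β) * ‖x‖ ^ q ∂μ) *
        t ^ (-((q + finrank ℝ E) / β)) := by
  have hint₀ := integrable_exp_neg_mul_rpow_norm_mul_rpow_norm μ hβ ht le_rfl
  have h₀ := integral_exp_neg_mul_rpow_norm_mul_rpow_norm μ hβ.ne' ht 0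
  simp only [Real.rpow_zero, mul_one, zero_add] at hint₀ h₀
  simp_rw [mul_one_add]
  rw [integral_add hint₀ (integrable_exp_neg_mul_rpow_norm_mul_rpow_norm μ hβ ht hq), h₀,
    integral_exp_neg_mul_rpow_norm_mul_rpow_norm μ hβ.ne' ht q]
  have hsplit : t ^ (-(finrank ℝ E / β)) = t ^ (q / β) * t ^ (-((q + finrank ℝ E) / β)) := by
    rw [← Real.rpow_add ht]
    ring_nf
  have hmono : t ^ (q / β) ≤ T ^ (q / β) := by gcongr
  have hI₀ : 0 ≤ ∫ x, Real.exp (-‖x‖ ^ β) ∂μ := integral_nonneg fun _ => (Real.exp_pos _).le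
  calc _ = (t ^ (q / β) * (∫ x, Real.exp (-‖x‖ ^ β) ∂μ) +
          ∫ x, Real.exp (-‖x‖ ^ β) * ‖x‖ ^ q ∂μ) * t ^ (-((q + finrank ℝ E) / β)) := by
        rw [hsplit]; ring
    _ ≤ _ := by gcongr

variable {Ψ : E → ℂ} {M β : ℝ}

theorem integrable_exp_neg_mul_re (hΨcont : Continuous Ψ) (hΨre : ∀ ξ, 0 ≤ (Ψ ξ).re)
    (hM : 0 ≤ M) (hβ : 0 < β) (hgrowth : ∀ ξ, M < ‖ξ‖ → ‖ξ‖ ^ β ≤ (Ψ ξ).re) {t : ℝ}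
    (ht : 0 < t) : Integrable (fun ξ => Real.exp (-(t * (Ψ ξ).re))) μ := by
  have hmaj := (integrable_exp_neg_mul_rpow_norm_mul_rpow_norm μ hβ ht le_rfl).const_mul
    (Real.exp (t * M ^ β))
  simp only [Real.rpow_zero, mul_one] at hmaj
  refine hmaj.mono' (by fun_prop) (.of_forall fun ξ => ?_)
  rw [Real.norm_of_nonneg (Real.exp_pos _).le]
  exact exp_neg_mul_re_le hΨre hM hβ.le hgrowth ht.le le_rfl ξ

theorem integral_norm_exp_sub_one_mul_exp_neg_re_le (hΨre : ∀ ξ, 0 ≤ (Ψ ξ).re) (hM : 0 ≤ M)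
    (hβ : 0 < β) (hgrowth : ∀ ξ, M < ‖ξ‖ → ‖ξ‖ ^ β ≤ (Ψ ξ).re) {L θ : ℝ}
    (hL : ∀ ξ, ‖Ψ ξ‖ ≤ L * (1 + ‖ξ‖ ^ 2)) (hθ₀ : 0 ≤ θ) (hθ₁ : θ ≤ 1) {t T ε : ℝ} (ht : 0 < t)
    (htT : t ≤ T) (hε : 0 ≤ ε) :
    ∫ ξ, ‖Complex.exp (-(ε : ℂ) * Ψ ξ) - 1‖ * Real.exp (-(t * (Ψ ξ).re)) ∂μ ≤
      2 * L ^ θ * Real.exp (T * M ^ β) * ε ^ θ *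
        ((T ^ (2 * θ / β) * ∫ ξ, Real.exp (-‖ξ‖ ^ β) ∂μ +
          ∫ ξ, Real.exp (-‖ξ‖ ^ β) * ‖ξ‖ ^ (2 * θ) ∂μ) * t ^ (-((2 * θ + finrank ℝ E) / β))) := by
  have hL₀ : 0 ≤ L := by simpa using (norm_nonneg _).trans (hL 0)
  have hpoint : ∀ ξ, ‖Complex.exp (-(ε : ℂ) * Ψ ξ) - 1‖ * Real.exp (-(t * (Ψ ξ).re)) ≤
      2 * L ^ θ * Real.exp (T * M ^ β) * ε ^ θ *
        (Real.exp (-(t * ‖ξ‖ ^ β)) * (1 + ‖ξ‖ ^ (2 * θ))) := by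
    intro ξ
    calc _ ≤ 2 * L ^ θ * ε ^ θ * (1 + ‖ξ‖ ^ (2 * θ)) *
          (Real.exp (T * M ^ β) * Real.exp (-(t * ‖ξ‖ ^ β))) :=
          mul_le_mul (Complex.norm_exp_neg_ofReal_mul_sub_one_le (hΨre ξ) (hL ξ) (norm_nonneg ξ)
            hε hθ₀ hθ₁) (exp_neg_mul_re_le hΨre hM hβ.le hgrowth ht.le htT ξ)
            (by positivity) (by positivity)
      _ = _ := by ring
  calc _ ≤ ∫ ξ, 2 * L ^ θ * Real.exp (T * M ^ β) * ε ^ θ *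
          (Real.exp (-(t * ‖ξ‖ ^ β)) * (1 + ‖ξ‖ ^ (2 * θ))) ∂μ :=
        integral_mono_of_nonneg (.of_forall fun ξ => by positivity)
          ((integrable_exp_neg_mul_rpow_norm_mul_one_add_rpow_norm μ hβ ht
            (by positivity)).const_mul _) (.of_forall hpoint)
    _ ≤ _ := by
        rw [integral_const_mul]
        gcongr
        exact integral_exp_neg_mul_rpow_norm_mul_one_add_rpow_norm_le μ hβ (by positivity) ht htT

end RadialMoments

theorem norm_transDensity_add_sub_le {n : ℕ} {Ψ : EuclideanSpace ℝ (Fin n) → ℂ}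
    (hΨcont : Continuous Ψ) (hΨre : ∀ ξ, 0 ≤ (Ψ ξ).re) {t ε : ℝ} (hε : 0 ≤ ε)
    (hint : Integrable fun ξ => Real.exp (-(t * (Ψ ξ).re))) (x : EuclideanSpace ℝ (Fin n)) :
    ‖transDensity n Ψ (t + ε) x - transDensity n Ψ t x‖ ≤
      ((2 * Real.pi) ^ n)⁻¹ *
        ∫ ξ, ‖Complex.exp (-(ε : ℂ) * Ψ ξ) - 1‖ * Real.exp (-(t * (Ψ ξ).re)) := by
  set F : ℝ → EuclideanSpace ℝ (Fin n) → ℂ := fun s ξ =>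
    Complex.exp (-(s : ℂ) * Ψ ξ) * Complex.exp (-(Complex.I * ((inner ℝ x ξ : ℝ) : ℂ)))
  have hnorm : ∀ s ξ, ‖F s ξ‖ = Real.exp (-(s * (Ψ ξ).re)) := by
    intro s ξ
    simp [F, norm_exp, mul_re]
  have hcont : ∀ s, Continuous (F s) := fun s => by fun_prop
  have hFt : Integrable (F t) :=
    hint.mono' (hcont t).aestronglyMeasurable (.of_forall fun ξ => (hnorm t ξ).le)
  have hFtε : Integrable (F (t + ε)) := by
    refine hint.mono' (hcont _).aestronglyMeasurable (.of_forall fun ξ => ?_)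
    rw [hnorm, Real.exp_le_exp]
    nlinarith [hΨre ξ]
  have hdiff : ∀ ξ, F (t + ε) ξ - F t ξ = (Complex.exp (-(ε : ℂ) * Ψ ξ) - 1) * F t ξ := by
    intro ξ
    simp only [F, Complex.ofReal_add, neg_add, add_mul, Complex.exp_add]
    ring
  rw [transDensity, transDensity, ← mul_sub, ← integral_sub hFtε hFt, norm_mul,
    Complex.norm_real, Real.norm_of_nonneg (by positivity)]
  gcongr
  refine (norm_integral_le_integral_norm _).trans_eq (integral_congr_ae (.of_forall fun ξ => ?_))
  dsimp only
  rw [hdiff, norm_mul, hnorm]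

theorem stmt4 (n : ℕ) (Ψ : EuclideanSpace ℝ (Fin n) → ℂ) (hΨcont : Continuous Ψ)
    (hΨre : ∀ ξ, 0 ≤ (Ψ ξ).re) (M β : ℝ) (hM : 0 < M) (hβ : β ∈ Set.Ioc (0 : ℝ) 2)
    (hgrowth : ∀ ξ : EuclideanSpace ℝ (Fin n), M < ‖ξ‖ → ‖ξ‖ ^ β ≤ (Ψ ξ).re)
    (hΨgrowth : ∃ L : ℝ, ∀ ξ, ‖Ψ ξ‖ ≤ L * (1 + ‖ξ‖ ^ 2))
    (θ : ℝ) (hθ : θ ∈ Set.Ioc (0 : ℝ) 1) (T : ℝ) (hT : 0 < T) :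
    ∃ C : ℝ, 0 < C ∧ ∀ t ∈ Set.Ioc (0 : ℝ) T, ∀ ε : ℝ, 0 < ε →
      ∀ x : EuclideanSpace ℝ (Fin n),
        ‖transDensity n Ψ (t + ε) x - transDensity n Ψ t x‖ ≤
          C * ε ^ θ * t ^ (-((2 * θ + n) / β)) := by
  obtain ⟨hβ₀, -⟩ := hβ
  obtain ⟨hθ₀, hθ₁⟩ := hθ
  obtain ⟨L, hL⟩ := hΨgrowth
  have hL₀ : 0 ≤ L := by simpa using (norm_nonneg _).trans (hL 0)
  set K := T ^ (2 * θ / β) * (∫ ξ : EuclideanSpace ℝ (Fin n), Real.exp (-‖ξ‖ ^ β)) +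
    ∫ ξ : EuclideanSpace ℝ (Fin n), Real.exp (-‖ξ‖ ^ β) * ‖ξ‖ ^ (2 * θ)
  have hK : 0 ≤ K := by positivity
  set A := ((2 * Real.pi) ^ n)⁻¹ * (2 * L ^ θ * Real.exp (T * M ^ β))
  refine ⟨A * K + 1, by positivity, ?_⟩
  rintro t ⟨ht, htT⟩ ε hε x
  calc ‖transDensity n Ψ (t + ε) x - transDensity n Ψ t x‖
      ≤ ((2 * Real.pi) ^ n)⁻¹ *
          ∫ ξ, ‖Complex.exp (-(ε : ℂ) * Ψ ξ) - 1‖ * Real.exp (-(t * (Ψ ξ).re)) :=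
        norm_transDensity_add_sub_le hΨcont hΨre hε.le
          (integrable_exp_neg_mul_re volume hΨcont hΨre hM.le hβ₀ hgrowth ht) x
    _ ≤ ((2 * Real.pi) ^ n)⁻¹ * (2 * L ^ θ * Real.exp (T * M ^ β) * ε ^ θ *
          (K * t ^ (-((2 * θ + n) / β)))) := by
        gcongr
        simpa only [finrank_euclideanSpace_fin] using integral_norm_exp_sub_one_mul_exp_neg_re_le
          volume hΨre hM.le hβ₀ hgrowth hL hθ₀.le hθ₁ ht htT hε.le
    _ = A * K * ε ^ θ * t ^ (-((2 * θ + n) / β)) := by ring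
    _ ≤ (A * K + 1) * ε ^ θ * t ^ (-((2 * θ + n) / β)) := by gcongr; linarith
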